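/- Monotonicity of the general diffusion model holds when nodes never leave the network: in the general model with arbitrary λ_d ∈ [0,1], τ = ∞ (no evacuation), λ_s = 0 (fusion by maximum) and no Undecided state (t_l(u) = t_h(u) for all u), enlarging any seed set cannot decrease the final set of Believed nodes: if ψ_k ⊆ ψ_k' for all k, then the final Believed set under (ψ_1,…,ψ_K) is contained in the final Believed set under (ψ_1',…,ψ_K'). -/

import Mathlib

open scoped NNReal

/-- Per-source information values in the general diffusion model with `λ_s = 0` (fusion by
maximum), a single threshold `t u` per node (no Undecided state), and no evacuation
(`τ = ∞`): a node `v` is Believed, and propagates its attenuated per-source values, when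
its information value `λ_d · Σ_k v_k + (1 − λ_d) · max_k v_k` reaches its threshold. -/
noncomputable def lval {V : Type*} [Fintype V] {K : ℕ} (lam : ℝ≥0) (α : V → V → ℝ≥0)
    (t : V → ℝ≥0) (init : V → Fin K → ℝ≥0) : ℕ → V → Fin K → ℝ≥0
  | 0 => init
  | m + 1 => fun u k =>
      lval lam α t init m u k ⊔
        Finset.univ.sup fun v : V =>
          if t v ≤ lam * (∑ k' : Fin K, lval lam α t init m v k') +
              (1 - lam) * Finset.univ.sup (fun k' => lval lam α t init m v k')
          then α v u * lval lam α t init m v k else 0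

/-- The information value `I(u) = λ_d · Σ_k v_k + (1 − λ_d) · max_k v_k` at node `u`
after `m` steps. -/
noncomputable def linfo {V : Type*} [Fintype V] {K : ℕ} (lam : ℝ≥0) (α : V → V → ℝ≥0)
    (t : V → ℝ≥0) (init : V → Fin K → ℝ≥0) (m : ℕ) (u : V) : ℝ≥0 :=
  lam * (∑ k : Fin K, lval lam α t init m u k) +
    (1 - lam) * Finset.univ.sup (fun k => lval lam α t init m u k)

private lemma lval_mono {V : Type*} [Fintype V] {K : ℕ} (lam : ℝ≥0) (α : V → V → ℝ≥0)
    (t : V → ℝ≥0) {init init' : V → Fin K → ℝ≥0}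
    (hinit : ∀ u k, init u k ≤ init' u k) :
    ∀ m u k, lval lam α t init m u k ≤ lval lam α t init' m u k := by
  intro m
  induction m with
  | zero => exact hinit
  | succ m ih =>
    intro u k
    simp only [lval]
    apply sup_le_sup (ih u k)
    apply Finset.sup_le
    intro v _
    by_cases hv : t v ≤ lam * (∑ k' : Fin K, lval lam α t init m v k') +
        (1 - lam) * Finset.univ.sup (fun k' => lval lam α t init m v k')
    · rw [if_pos hv]
      have hv' : t v ≤ lam * (∑ k' : Fin K, lval lam α t init' m v k') +
          (1 - lam) * Finset.univ.sup (fun k' => lval lam α t init' m v k') := by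
        refine hv.trans (add_le_add (mul_le_mul_right ?_ _) (mul_le_mul_right ?_ _))
        · exact Finset.sum_le_sum fun k' _ => ih v k'
        · exact Finset.sup_mono_fun fun k' _ => ih v k'
      calc α v u * lval lam α t init m v k ≤ α v u * lval lam α t init' m v k :=
            mul_le_mul_right (ih v k) _
        _ ≤ _ := by
            refine le_trans ?_ (Finset.le_sup (Finset.mem_univ v))
            rw [if_pos hv']
    · rw [if_neg hv]; exact zero_le

/-- Monotonicity of the general diffusion model when nodes never leave the network: with
arbitrary `λ_d ∈ [0,1]`, fusion by maximum (`λ_s = 0`), no Undecided state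
(`t_l = t_h = t`), and no evacuation, enlarging every seed set cannot decrease the final
set of Believed nodes. -/
theorem general_model_monotone_no_evacuation {V : Type*} [Fintype V] [DecidableEq V]
    {K : ℕ} (lam : ℝ≥0) (hlam : lam ≤ 1) (α : V → V → ℝ≥0) (t : V → ℝ≥0)
    (I : Fin K → ℝ≥0) (β : Fin K → V → ℝ≥0)
    (hα : ∀ u v, α u v ≤ 1) (hβ : ∀ k u, β k u ≤ 1)
    (ψ ψ' : Fin K → Finset V) (h : ∀ k, ψ k ⊆ ψ' k) :
    {u : V | ∃ m : ℕ,
        t u ≤ linfo lam α t (fun u j => if u ∈ ψ j then β j u * I j else 0) m u} ⊆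
      {u : V | ∃ m : ℕ,
        t u ≤ linfo lam α t (fun u j => if u ∈ ψ' j then β j u * I j else 0) m u} := by
  intro u ⟨m, hm⟩
  refine ⟨m, hm.trans ?_⟩
  have hinit : ∀ (u : V) (j : Fin K),
      (if u ∈ ψ j then β j u * I j else 0) ≤ (if u ∈ ψ' j then β j u * I j else 0) := by
    intro u j
    by_cases hu : u ∈ ψ j
    · rw [if_pos hu, if_pos (h j hu)]
    · rw [if_neg hu]; exact zero_le
  have := lval_mono lam α t hinit m
  exact add_le_add (mul_le_mul_right (Finset.sum_le_sum fun k _ => this u k) _)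
    (mul_le_mul_right (Finset.sup_mono_fun fun k _ => this u k) _)
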